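/- Let X, Y be bounded linear operators on a complex Hilbert space H and let T be the 2×2 off-diagonal operator matrix on H ⊕ H with blocks (0, X; Y, 0). Then w(T) ≥ max{‖X‖/4, ‖Y‖/4} + (1/4)·(‖X+Y*‖/2 + ‖X−Y*‖/2) + (1/2)·|‖X+Y*‖/2 − ‖X−Y*‖/2|. -/

import Mathlib

/-!
Writing `z = (x, y)`, one has `⟪T z, z⟫ = ⟪X y, x⟫ + ⟪Y x, y⟫`, whose real part is
`re ⟪(X + Y†) y, x⟫` and whose imaginary part is `im ⟪(X - Y†) y, x⟫`. Taking `x` parallel to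
`(X ± Y†) y` gives `‖X ± Y†‖ ≤ 2 nr T`. Since `2‖X‖` and `2‖Y‖` are both at most
`‖X + Y†‖ + ‖X - Y†‖`, the right-hand side is at most `max ‖X + Y†‖ ‖X - Y†‖ / 2 ≤ nr T`.
-/

open ContinuousLinearMap

noncomputable def nr {E : Type*} [NormedAddCommGroup E] [InnerProductSpace ℂ E]
    (T : E →L[ℂ] E) : ℝ :=
  sSup {r : ℝ | ∃ x : E, ‖x‖ = 1 ∧ r = ‖(inner ℂ (T x) x : ℂ)‖}

noncomputable def er {E : Type*} [NormedAddCommGroup E] [InnerProductSpace ℂ E]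
    (B C : E →L[ℂ] E) : ℝ :=
  sSup {r : ℝ | ∃ x : E, ‖x‖ = 1 ∧
    r = Real.sqrt (‖(inner ℂ (B x) x : ℂ)‖ ^ 2 + ‖(inner ℂ (C x) x : ℂ)‖ ^ 2)}

open scoped InnerProductSpace

section NumericalRadius

variable {E : Type*} [NormedAddCommGroup E] [InnerProductSpace ℂ E]

lemma bddAbove_nr_set (T : E →L[ℂ] E) :
    BddAbove {r : ℝ | ∃ x : E, ‖x‖ = 1 ∧ r = ‖⟪T x, x⟫_ℂ‖} := by
  refine ⟨‖T‖, ?_⟩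
  rintro r ⟨x, hx, rfl⟩
  calc ‖⟪T x, x⟫_ℂ‖ ≤ ‖T x‖ * ‖x‖ := norm_inner_le_norm _ _
    _ ≤ ‖T‖ := by simpa [hx] using T.le_opNorm x

lemma nr_nonneg (T : E →L[ℂ] E) : 0 ≤ nr T :=
  Real.sSup_nonneg fun _ ⟨_, _, hr⟩ => hr ▸ norm_nonneg _

lemma norm_inner_le_nr (T : E →L[ℂ] E) {x : E} (hx : ‖x‖ = 1) : ‖⟪T x, x⟫_ℂ‖ ≤ nr T :=
  le_csSup (bddAbove_nr_set T) ⟨x, hx, rfl⟩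

lemma norm_inner_le_nr_mul_sq (T : E →L[ℂ] E) (x : E) : ‖⟪T x, x⟫_ℂ‖ ≤ nr T * ‖x‖ ^ 2 := by
  rcases eq_or_ne x 0 with rfl | hx
  · simp
  have hx' : ‖x‖ ≠ 0 := norm_ne_zero_iff.2 hx
  have h := norm_inner_le_nr T (x := ((‖x‖⁻¹ : ℝ) : ℂ) • x) (by simp [norm_smul, hx'])
  rw [map_smul, inner_smul_left, inner_smul_right, norm_mul, norm_mul] at h
  simp only [Complex.conj_ofReal, Complex.norm_real, norm_inv, norm_norm] at h
  calc ‖⟪T x, x⟫_ℂ‖ = ‖x‖⁻¹ * (‖x‖⁻¹ * ‖⟪T x, x⟫_ℂ‖) * ‖x‖ ^ 2 := by field_simp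
    _ ≤ nr T * ‖x‖ ^ 2 := by gcongr

end NumericalRadius

lemma ContinuousLinearMap.norm_le_of_re_inner_le {𝕜 E : Type*} [RCLike 𝕜] [NormedAddCommGroup E]
    [InnerProductSpace 𝕜 E] (A : E →L[𝕜] E) {c : ℝ} (hc : 0 ≤ c)
    (h : ∀ x y, RCLike.re ⟪A y, x⟫_𝕜 ≤ c * (‖x‖ ^ 2 + ‖y‖ ^ 2)) : ‖A‖ ≤ 2 * c := by
  refine A.opNorm_le_bound (by positivity) fun v => ?_
  rcases eq_or_ne (A v) 0 with hAv | hAv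
  · simp [hAv, hc, mul_nonneg]
  have hAv' : 0 < ‖A v‖ := norm_pos_iff.2 hAv
  set x : E := ((‖v‖ / ‖A v‖ : ℝ) : 𝕜) • A v
  have hx : ‖x‖ = ‖v‖ := by
    rw [norm_smul, RCLike.norm_ofReal, abs_of_nonneg (by positivity), div_mul_cancel₀ _ hAv'.ne']
  have hre : RCLike.re ⟪A v, x⟫_𝕜 = ‖v‖ * ‖A v‖ := by
    rw [inner_smul_real_right, inner_self_eq_norm_sq_to_K, RCLike.smul_re, ← RCLike.ofReal_pow,
      RCLike.ofReal_re]
    field_simp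
  have hv : 0 < ‖v‖ := norm_pos_iff.2 fun hv => hAv (by simp [hv])
  have key := h x v
  rw [hx, hre] at key
  nlinarith

lemma two_mul_norm_le_norm_add_add_norm_sub {𝕜 E : Type*} [RCLike 𝕜] [NormedAddCommGroup E]
    [NormedSpace 𝕜 E] (x y : E) : 2 * ‖x‖ ≤ ‖x + y‖ + ‖x - y‖ :=
  calc 2 * ‖x‖ = ‖(2 : ℕ) • x‖ := by rw [RCLike.norm_nsmul 𝕜, nsmul_eq_mul, Nat.cast_ofNat]
    _ = ‖(x + y) + (x - y)‖ := by rw [two_nsmul, add_add_sub_cancel]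
    _ ≤ ‖x + y‖ + ‖x - y‖ := norm_add_le _ _

lemma WithLp.prod_norm_sq_toLp {α β : Type*} [SeminormedAddCommGroup α]
    [SeminormedAddCommGroup β] (x : α) (y : β) :
    ‖WithLp.toLp 2 (x, y)‖ ^ 2 = ‖x‖ ^ 2 + ‖y‖ ^ 2 :=
  WithLp.prod_norm_sq_eq_of_L2 _

def IsOffDiagonal {𝕜 H : Type*} [RCLike 𝕜] [NormedAddCommGroup H] [InnerProductSpace 𝕜 H]
    (X Y : H →L[𝕜] H) (T : WithLp 2 (H × H) →L[𝕜] WithLp 2 (H × H)) : Prop :=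
  ∀ x y : H, T (WithLp.toLp 2 (x, y)) = WithLp.toLp 2 (X y, Y x)

namespace IsOffDiagonal

section RCLike

variable {𝕜 H : Type*} [RCLike 𝕜] [NormedAddCommGroup H] [InnerProductSpace 𝕜 H]
  {X Y : H →L[𝕜] H} {T : WithLp 2 (H × H) →L[𝕜] WithLp 2 (H × H)}

lemma inner_apply (hT : IsOffDiagonal X Y T) (x y : H) :
    ⟪T (WithLp.toLp 2 (x, y)), WithLp.toLp 2 (x, y)⟫_𝕜 = ⟪X y, x⟫_𝕜 + ⟪Y x, y⟫_𝕜 := by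
  rw [hT, WithLp.prod_inner_apply]

lemma re_inner_apply [CompleteSpace H] (hT : IsOffDiagonal X Y T) (x y : H) :
    RCLike.re ⟪T (WithLp.toLp 2 (x, y)), WithLp.toLp 2 (x, y)⟫_𝕜
      = RCLike.re ⟪(X + adjoint Y) y, x⟫_𝕜 := by
  rw [hT.inner_apply, add_apply, inner_add_left, adjoint_inner_left, ← inner_conj_symm y,
    map_add, map_add, RCLike.conj_re]

lemma im_inner_apply [CompleteSpace H] (hT : IsOffDiagonal X Y T) (x y : H) :
    RCLike.im ⟪T (WithLp.toLp 2 (x, y)), WithLp.toLp 2 (x, y)⟫_𝕜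
      = RCLike.im ⟪(X - adjoint Y) y, x⟫_𝕜 := by
  rw [hT.inner_apply, sub_apply, inner_sub_left, adjoint_inner_left, ← inner_conj_symm y,
    map_add, map_sub, RCLike.conj_im, sub_neg_eq_add]

end RCLike

variable {H : Type*} [NormedAddCommGroup H] [InnerProductSpace ℂ H] [CompleteSpace H]
  {X Y : H →L[ℂ] H} {T : WithLp 2 (H × H) →L[ℂ] WithLp 2 (H × H)}

lemma norm_add_adjoint_le (hT : IsOffDiagonal X Y T) : ‖X + adjoint Y‖ ≤ 2 * nr T := by
  refine (X + adjoint Y).norm_le_of_re_inner_le (nr_nonneg T) fun x y => ?_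
  rw [← hT.re_inner_apply, ← WithLp.prod_norm_sq_toLp]
  exact (Complex.re_le_norm _).trans (norm_inner_le_nr_mul_sq T _)

lemma norm_sub_adjoint_le (hT : IsOffDiagonal X Y T) : ‖X - adjoint Y‖ ≤ 2 * nr T := by
  refine (X - adjoint Y).norm_le_of_re_inner_le (nr_nonneg T) fun x y => ?_
  have hre : RCLike.re ⟪(X - adjoint Y) y, x⟫_ℂ
      = RCLike.im ⟪(X - adjoint Y) y, Complex.I • x⟫_ℂ := by
    simp
  have hIx : ‖Complex.I • x‖ = ‖x‖ := by rw [norm_smul, Complex.norm_I, one_mul]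
  rw [hre, ← hT.im_inner_apply, ← hIx, ← WithLp.prod_norm_sq_toLp]
  exact (Complex.im_le_norm _).trans (norm_inner_le_nr_mul_sq T _)

end IsOffDiagonal

theorem stmt_17 {H : Type*} [NormedAddCommGroup H] [InnerProductSpace ℂ H] [CompleteSpace H]
    (X Y : H →L[ℂ] H) (T : WithLp 2 (H × H) →L[ℂ] WithLp 2 (H × H))
    (hT : ∀ x y : H, T ((WithLp.equiv 2 (H × H)).symm (x, y))
        = (WithLp.equiv 2 (H × H)).symm (X y, Y x)) :
    nr T ≥ max (‖X‖ / 4) (‖Y‖ / 4)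
      + (1 / 4) * (‖X + adjoint Y‖ / 2 + ‖X - adjoint Y‖ / 2)
      + (1 / 2) * |‖X + adjoint Y‖ / 2 - ‖X - adjoint Y‖ / 2| := by
  have hT' : IsOffDiagonal X Y T := hT
  have ha := hT'.norm_add_adjoint_le
  have hb := hT'.norm_sub_adjoint_le
  have hX := two_mul_norm_le_norm_add_add_norm_sub (𝕜 := ℂ) X (adjoint Y)
  have hY := two_mul_norm_le_norm_add_add_norm_sub (𝕜 := ℂ) (adjoint Y) X
  rw [LinearIsometryEquiv.norm_map, add_comm (adjoint Y), norm_sub_rev] at hY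
  have hmax : max (‖X‖ / 4) (‖Y‖ / 4) ≤ (‖X + adjoint Y‖ + ‖X - adjoint Y‖) / 8 :=
    max_le (by linarith) (by linarith)
  cases abs_cases (‖X + adjoint Y‖ / 2 - ‖X - adjoint Y‖ / 2) <;> linarith
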